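/- Let Φ₁, …, Φ_l be alternating multilinear forms on V = ℝ^N (of degrees p₁, …, p_l), and let 𝔞 = {A ∈ End(V) : A·Φ_i = 0 for all i} be the space of endomorphisms annihilating every Φ_i under the derivation action. If 𝔞 is contained in 𝔰𝔬(N), then 𝔞 satisfies condition (C1): for every nonzero v ∈ V, the linear map A ↦ p_v ∘ A ∘ p_v is injective on 𝔞, where p_v is the orthogonal projection of V onto the orthogonal complement of v. -/

import Mathlib

/-
Let `C = A - B`. It annihilates every `Φᵢ`, hence is skew, and `p_v C p_v = 0`; a skew map
with this property has the form `C = w ⊗ v - v ⊗ w` with `w ⊥ v`. If `w ≠ 0`, write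
`a = v ⊗ w` and `b = w ⊗ v` for the two rank-one maps (`x ↦ ⟪w, x⟫ v` and `x ↦ ⟪v, x⟫ w`).
On alternating forms `b² = 0` and `aba = ‖v‖²‖w‖² a`, so `C·Φ = 0`, i.e. `a·Φ = b·Φ`, forces
`a·Φ = 0`. Thus `a` annihilates every `Φᵢ` and must be skew, which a nonzero rank-one map
never is. Hence `w = 0` and `A = B`.
-/

open scoped RealInnerProductSpace

noncomputable section

abbrev V (N : ℕ) := EuclideanSpace ℝ (Fin N)

/-- An endomorphism is skew-symmetric (i.e. belongs to `𝔰𝔬(N)`). -/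
def skew {N : ℕ} (A : Module.End ℝ (V N)) : Prop :=
  ∀ x y : V N, ⟪A x, y⟫ = - ⟪x, A y⟫

/-- Orthogonal projection of `V N` onto the orthogonal complement of `v`. -/
def pv {N : ℕ} (v : V N) : Module.End ℝ (V N) :=
  (Submodule.span ℝ {v})ᗮ.subtype ∘ₗ
    (Submodule.span ℝ {v})ᗮ.orthogonalProjectionOnto.toLinearMap

/-- Condition (C1): for every nonzero `v`, the map `A ↦ p_v ∘ A ∘ p_v` is injective on `𝔤`. -/
def C1 {N : ℕ} (g : Set (Module.End ℝ (V N))) : Prop :=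
  ∀ v : V N, v ≠ 0 → Set.InjOn (fun A => pv v ∘ₗ A ∘ₗ pv v) g

/-- The derivation action of an endomorphism `A` on a `p`-linear alternating form `Φ`:
`(A·Φ)(x₁, …, x_p) = Σ_s Φ(x₁, …, A x_s, …, x_p)`. -/
def derivAct {N p : ℕ} (A : Module.End ℝ (V N))
    (Φ : AlternatingMap ℝ (V N) ℝ (Fin p)) : (Fin p → V N) → ℝ :=
  fun x => ∑ s : Fin p, Φ (Function.update x s (A (x s)))

open Function InnerProductSpace

theorem AlternatingMap.map_update_update_swap {R M M' ι : Type*} [Semiring R]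
    [AddCommMonoid M] [Module R M] [AddCommGroup M'] [Module R M'] [DecidableEq ι]
    (f : M [⋀^ι]→ₗ[R] M') {u s : ι} (hus : u ≠ s) (x : ι → M) (a b : M) :
    f (update (update x s a) u b) = -f (update (update x u a) s b) := by
  rw [← f.map_swap _ hus]
  congr 1
  ext k
  simp only [comp_apply, update_apply, Equiv.swap_apply_def]
  split_ifs <;> simp_all

section RankOneAction

variable {E ι : Type*} [NormedAddCommGroup E] [InnerProductSpace ℝ E] [Fintype ι] [DecidableEq ι]

/-- The derivation action of `rankOne ℝ v w`, extended from alternating maps to all functions. -/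
def rankOneAct (v w : E) (f : (ι → E) → ℝ) (x : ι → E) : ℝ :=
  ∑ s, ⟪w, x s⟫ * f (update x s v)

variable {v w : E} (Φ : AlternatingMap ℝ E ℝ ι)

theorem rankOneAct_rankOneAct_self (h : ⟪w, v⟫ = 0) :
    rankOneAct v w (rankOneAct v w Φ) = 0 := by
  funext x
  refine Finset.sum_eq_zero fun t _ => mul_eq_zero_of_right _ <|
    Finset.sum_eq_zero fun s _ => ?_
  rcases eq_or_ne s t with rfl | hst
  · simp [h]
  · rw [Φ.map_update_update _ hst.symm, mul_zero]

omit [DecidableEq ι] in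
theorem sum_sum_eq_zero_of_antisymm {g : ι → ι → ℝ} (hg : ∀ u s, g s u = -g u s) :
    ∑ u, ∑ s, g u s = 0 := by
  have h : ∑ u, ∑ s, g u s = -∑ u, ∑ s, g u s := by
    calc ∑ u, ∑ s, g u s = ∑ u, ∑ s, g s u := Finset.sum_comm
      _ = -∑ u, ∑ s, g u s := by
        rw [← Finset.sum_neg_distrib]
        exact Finset.sum_congr rfl fun u _ => by
          rw [← Finset.sum_neg_distrib]; exact Finset.sum_congr rfl fun s _ => hg u s
  linarith

theorem rankOneAct_rankOneAct_update (h : ⟪w, v⟫ = 0) (x : ι → E) (u : ι) :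
    rankOneAct w v (rankOneAct v w Φ) (update x u v) =
      ⟪v, v⟫ * rankOneAct v w Φ (update x u w) := by
  rw [rankOneAct, Finset.sum_eq_single u]
  · rw [update_self, update_idem]
  · intro t _ htu
    refine mul_eq_zero_of_right _ <| Finset.sum_eq_zero fun s _ => ?_
    rcases eq_or_ne s u with rfl | hsu
    · simp [update_of_ne htu.symm, h]
    · have hsv : update (update (update x u v) t w) s v u = v := by
        simp [update_of_ne hsu.symm, update_of_ne htu.symm]
      rw [Φ.map_eq_zero_of_eq _ (i := s) (j := u) (by rw [hsv, update_self]) hsu, mul_zero]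
  · simp

theorem rankOneAct_update_self (x : ι → E) (u : ι) :
    rankOneAct v w Φ (update x u w) = ⟪w, w⟫ * Φ (update x u v) +
      ∑ s, if s = u then 0 else ⟪w, x s⟫ * Φ (update (update x u w) s v) := by
  rw [rankOneAct, ← Fintype.sum_ite_eq' u fun _ => ⟪w, w⟫ * Φ (update x u v),
    ← Finset.sum_add_distrib]
  refine Finset.sum_congr rfl fun s _ => ?_
  rcases eq_or_ne s u with rfl | hsu
  · simp
  · simp [hsu]

theorem rankOneAct_rankOneAct_rankOneAct (h : ⟪w, v⟫ = 0) :
    rankOneAct v w (rankOneAct w v (rankOneAct v w Φ)) =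
      (⟪v, v⟫ * ⟪w, w⟫) • rankOneAct v w Φ := by
  funext x
  have hoff : ∑ u, ∑ s, ⟪w, x u⟫ *
      (if s = u then 0 else ⟪w, x s⟫ * Φ (update (update x u w) s v)) = 0 := by
    refine sum_sum_eq_zero_of_antisymm fun u s => ?_
    rcases eq_or_ne s u with rfl | hsu
    · simp
    · rw [if_neg hsu.symm, if_neg hsu, Φ.map_update_update_swap hsu.symm]
      ring
  calc rankOneAct v w (rankOneAct w v (rankOneAct v w Φ)) x
      = ∑ u, ⟪w, x u⟫ * (⟪v, v⟫ * (⟪w, w⟫ * Φ (update x u v) +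
          ∑ s, if s = u then 0 else ⟪w, x s⟫ * Φ (update (update x u w) s v))) := by
        rw [rankOneAct]
        refine Finset.sum_congr rfl fun u _ => ?_
        rw [rankOneAct_rankOneAct_update Φ h, rankOneAct_update_self]
    _ = ⟪v, v⟫ * ⟪w, w⟫ * rankOneAct v w Φ x + ⟪v, v⟫ * ∑ u, ∑ s, ⟪w, x u⟫ *
          (if s = u then 0 else ⟪w, x s⟫ * Φ (update (update x u w) s v)) := by
        rw [rankOneAct, Finset.mul_sum, Finset.mul_sum, ← Finset.sum_add_distrib]
        refine Finset.sum_congr rfl fun u _ => ?_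
        simp only [← Finset.mul_sum]
        ring
    _ = ((⟪v, v⟫ * ⟪w, w⟫) • rankOneAct v w Φ) x := by rw [hoff]; simp

theorem rankOneAct_eq_zero_of_eq (hv : v ≠ 0) (hw : w ≠ 0) (h : ⟪w, v⟫ = 0)
    (hΦ : rankOneAct v w Φ = rankOneAct w v Φ) : rankOneAct v w Φ = 0 := by
  have hvw : ⟪v, w⟫ = 0 := by rw [real_inner_comm, h]
  have hsmul : (⟪v, v⟫ * ⟪w, w⟫) • rankOneAct v w Φ = 0 := by
    rw [← rankOneAct_rankOneAct_rankOneAct Φ h, hΦ, rankOneAct_rankOneAct_self Φ hvw]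
    funext x
    simp [rankOneAct]
  exact (smul_eq_zero.mp hsmul).resolve_left
    (mul_ne_zero (inner_self_ne_zero.mpr hv) (inner_self_ne_zero.mpr hw))

end RankOneAction

variable {N : ℕ}

theorem derivAct_sub {p : ℕ} (A B : Module.End ℝ (V N))
    (Φ : AlternatingMap ℝ (V N) ℝ (Fin p)) :
    derivAct (A - B) Φ = derivAct A Φ - derivAct B Φ := by
  funext x
  simp [derivAct, Φ.map_update_sub, Finset.sum_sub_distrib]

theorem derivAct_rankOne {p : ℕ} (v w : V N) (Φ : AlternatingMap ℝ (V N) ℝ (Fin p)) :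
    derivAct (rankOne ℝ v w : Module.End ℝ (V N)) Φ = rankOneAct v w Φ := by
  funext x
  simp [derivAct, rankOneAct, Φ.map_update_smul]

theorem eq_zero_or_eq_zero_of_skew_rankOne {v w : V N}
    (h : skew (rankOne ℝ v w : Module.End ℝ (V N))) : v = 0 ∨ w = 0 := by
  have hw := h w v
  simp only [ContinuousLinearMap.coe_coe, rankOne_apply, real_inner_smul_left,
    real_inner_smul_right] at hw
  have hprod : ⟪w, w⟫ * ⟪v, v⟫ = 0 := by
    nlinarith [mul_nonneg (real_inner_self_nonneg (x := w)) (real_inner_self_nonneg (x := v))]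
  rcases mul_eq_zero.mp hprod with hw0 | hv0
  · exact .inr (inner_self_eq_zero.mp hw0)
  · exact .inl (inner_self_eq_zero.mp hv0)

theorem pv_apply (v y : V N) : pv v y = y - (⟪v, y⟫ / ‖v‖ ^ 2) • v := by
  have hproj : (Submodule.span ℝ {v}).starProjection y = (⟪v, y⟫ / ‖v‖ ^ 2) • v :=
    Submodule.starProjection_singleton ℝ y
  rw [eq_sub_iff_add_eq, add_comm, ← hproj]
  exact Submodule.starProjection_add_starProjection_orthogonal y

theorem exists_eq_rankOne_sub_rankOne {v : V N} {C : Module.End ℝ (V N)}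
    (hC : skew C) (hCv : pv v ∘ₗ C ∘ₗ pv v = 0) :
    ∃ w, ⟪w, v⟫ = 0 ∧ C = (rankOne ℝ w v - rankOne ℝ v w : V N →L[ℝ] V N) := by
  have hCvv : ⟪C v, v⟫ = 0 := by linarith [hC v v, real_inner_comm v (C v)]
  refine ⟨(‖v‖ ^ 2)⁻¹ • C v, by rw [real_inner_smul_left, hCvv, mul_zero], ?_⟩
  ext1 x
  set c := ⟪v, x⟫ / ‖v‖ ^ 2
  have hx : x = c • v + pv v x := by rw [pv_apply]; abel
  have hCpv : C (pv v x) = (⟪v, C (pv v x)⟫ / ‖v‖ ^ 2) • v := by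
    have h := pv_apply v (C (pv v x))
    rw [show pv v (C (pv v x)) = 0 from LinearMap.congr_fun hCv x] at h
    exact (sub_eq_zero.mp h.symm)
  have hvCpv : ⟪v, C (pv v x)⟫ = -⟪C v, x⟫ := by
    have hCvpv : ⟪C v, pv v x⟫ = ⟪C v, x⟫ := by
      rw [pv_apply, inner_sub_right, real_inner_smul_right, hCvv, mul_zero, sub_zero]
    linarith [hC v (pv v x)]
  calc C x = c • C v + C (pv v x) := by rw [← map_smul, ← map_add, ← hx]
    _ = _ := by
      rw [hCpv, hvCpv]
      simp only [ContinuousLinearMap.coe_coe, sub_apply, rankOne_apply,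
        real_inner_smul_left, smul_smul, c]
      rw [sub_eq_add_neg, ← neg_smul]
      congr 2
      ring

theorem statement4_general (N : ℕ) (l : ℕ) (p : Fin l → ℕ)
    (Φ : ∀ i : Fin l, AlternatingMap ℝ (V N) ℝ (Fin (p i)))
    (hso : ∀ A : Module.End ℝ (V N),
      (∀ (i : Fin l) (x : Fin (p i) → V N), derivAct A (Φ i) x = 0) → skew A) :
    C1 {A : Module.End ℝ (V N) |
      ∀ (i : Fin l) (x : Fin (p i) → V N), derivAct A (Φ i) x = 0} := by
  intro v hv A hA B hB hAB
  have hann_sub : ∀ i x, derivAct (A - B) (Φ i) x = 0 := fun i x => by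
    rw [derivAct_sub, Pi.sub_apply, hA i x, hB i x, sub_self]
  have hCv : pv v ∘ₗ (A - B) ∘ₗ pv v = 0 := by
    rw [LinearMap.sub_comp, LinearMap.comp_sub]
    exact sub_eq_zero.mpr hAB
  obtain ⟨w, hwv, hC_eq⟩ := exists_eq_rankOne_sub_rankOne (hso _ hann_sub) hCv
  suffices hw : w = 0 by simpa [hw, sub_eq_zero] using hC_eq
  by_contra hw
  have hann_rankOne : ∀ i x, derivAct (rankOne ℝ v w : Module.End ℝ (V N)) (Φ i) x = 0 := by
    intro i x
    have hsymm : rankOneAct v w (Φ i) = rankOneAct w v (Φ i) := by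
      funext y
      have := hann_sub i y
      rw [hC_eq, ContinuousLinearMap.toLinearMap_sub, derivAct_sub, derivAct_rankOne,
        derivAct_rankOne] at this
      exact (sub_eq_zero.mp this).symm
    rw [derivAct_rankOne, rankOneAct_eq_zero_of_eq (Φ i) hv hw hwv hsymm, Pi.zero_apply]
  exact (eq_zero_or_eq_zero_of_skew_rankOne (hso _ hann_rankOne)).elim hv hw

/-- If the annihilator `𝔞 = {A ∈ End(V) : A·Φᵢ = 0 for all i}` of a family of alternating
forms `Φ₁, …, Φ_l` is contained in `𝔰𝔬(N)`, then `𝔞` satisfies condition (C1). -/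
theorem statement4 (N : ℕ) (hN : 1 ≤ N) (l : ℕ) (p : Fin l → ℕ)
    (Φ : ∀ i : Fin l, AlternatingMap ℝ (V N) ℝ (Fin (p i)))
    (hso : ∀ A : Module.End ℝ (V N),
      (∀ (i : Fin l) (x : Fin (p i) → V N), derivAct A (Φ i) x = 0) → skew A) :
    C1 {A : Module.End ℝ (V N) |
      ∀ (i : Fin l) (x : Fin (p i) → V N), derivAct A (Φ i) x = 0} :=
  statement4_general N l p Φ hso
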